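/- For n ≥ 4, the exponent set of PSC_n^{1,1} is {2(t+1) : 0 ≤ t ≤ ⌊(n−2)/2⌋}, and the exponent set of PSC_n^{0,1} is {2t : 2 ≤ t ≤ n−1}; in particular 2(n−1) is attained by a primitive symmetric companion matrix of order n. -/

import Mathlib

/-!
For a `(0,1)` companion matrix `C` whose last row has support `S ∋ n - 1`, the graph of `C + Cᵀ`
is the path `0 — 1 — ⋯ — n-1` together with an edge from the hub `n - 1` to every vertex of `S`,
including a loop at the hub. A walk of length `k` from `i` to `j` either stays on the path, so that
`|i - j| ≤ k` and `i + j + k` is even, or passes through the hub, so that `d i + d j ≤ k` where `d`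
is the distance to the hub; conversely each condition yields a walk, by bouncing along an edge or
going around the loop. Hence the exponent is `2 · max d`: odd lengths fail at a vertex `a` farthest
from the hub, and shorter even lengths fail between `a` and a neighbour of `a` on the path.
If `c_{n,1} = 1` then `d i ≤ min (i + 1) (n - 1 - i)`, so `max d ≤ n / 2`; if `c_{n,1} = 0` then
`2 ≤ d 0` and `d i ≤ n - 1 - i`. Supports `{0} ∪ [2b - 1, n - 1]` and `[b - 1, n - 1]` realise
every value of `max d` in between.
-/

def IsPrimitive {n : ℕ} (A : Matrix (Fin n) (Fin n) ℝ) : Prop :=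
  (∀ i j, 0 ≤ A i j) ∧ ∃ k : ℕ, 0 < k ∧ ∀ i j, 0 < (A ^ k) i j

def ExpIs {n : ℕ} (A : Matrix (Fin n) (Fin n) ℝ) (e : ℕ) : Prop :=
  IsLeast {k : ℕ | 0 < k ∧ ∀ i j, 0 < (A ^ k) i j} e

/-- A `(0,1)` companion matrix: superdiagonal entries `1` and all other entries
`0` in the first `n-1` rows; last-row entries in `{0,1}`. -/
def IsCompanion {n : ℕ} (C : Matrix (Fin n) (Fin n) ℝ) : Prop :=
  ∀ i j : Fin n,
    if (i : ℕ) + 1 < n then (C i j = if (j : ℕ) = (i : ℕ) + 1 then 1 else 0)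
    else (C i j = 0 ∨ C i j = 1)

/-- The set `C_n^{α,ε}` of symmetric companion matrices `C + Cᵀ` with
`c_{n,1} = α` and `c_{n,n} = ε`. -/
def companionClass (n : ℕ) (hn : 0 < n) (α ε : ℝ) :
    Set (Matrix (Fin n) (Fin n) ℝ) :=
  {A | ∃ C : Matrix (Fin n) (Fin n) ℝ, IsCompanion C ∧
    C ⟨n - 1, by omega⟩ ⟨0, hn⟩ = α ∧ C ⟨n - 1, by omega⟩ ⟨n - 1, by omega⟩ = ε ∧
    A = C + C.transpose}

/-- `mRun S` : the maximum length of a run of consecutive integers contained in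
`S` (`0` for the empty set). -/
noncomputable def mRun (S : Set ℕ) : ℕ := sSup {L : ℕ | ∃ a : ℕ, ∀ t, t < L → a + t ∈ S}

/-- The exponent set of a family of matrices. -/
def expSet {n : ℕ} (X : Set (Matrix (Fin n) (Fin n) ℝ)) : Set ℕ :=
  {e | ∃ A ∈ X, IsPrimitive A ∧ ExpIs A e}

namespace Relation

variable {α β : Type*} {r : α → α → Prop} {a b c : α} {k l : ℕ}

inductive WalkOfLength (r : α → α → Prop) : ℕ → α → α → Prop
  | refl (a : α) : WalkOfLength r 0 a a
  | tail {k : ℕ} {a b c : α} : WalkOfLength r k a b → r b c → WalkOfLength r (k + 1) a c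

namespace WalkOfLength

theorem zero_iff : WalkOfLength r 0 a b ↔ a = b := by
  refine ⟨fun h => ?_, fun h => h ▸ refl a⟩
  cases h
  rfl

theorem succ_iff : WalkOfLength r (k + 1) a c ↔ ∃ b, WalkOfLength r k a b ∧ r b c := by
  refine ⟨fun h => ?_, fun ⟨_, h, hbc⟩ => tail h hbc⟩
  cases h with
  | tail h hbc => exact ⟨_, h, hbc⟩

theorem single (h : r a b) : WalkOfLength r 1 a b :=
  tail (refl a) h

theorem trans (h₁ : WalkOfLength r k a b) (h₂ : WalkOfLength r l b c) :
    WalkOfLength r (k + l) a c := by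
  induction h₂ with
  | refl => exact h₁
  | tail _ hbc ih => exact tail (ih h₁) hbc

theorem head (hab : r a b) (h : WalkOfLength r k b c) : WalkOfLength r (k + 1) a c :=
  Nat.add_comm 1 k ▸ (single hab).trans h

theorem symm [Std.Symm r] (h : WalkOfLength r k a b) : WalkOfLength r k b a := by
  induction h with
  | refl => exact refl _
  | tail _ hbc ih => exact head (Std.Symm.symm _ _ hbc) ih

theorem of_loop (h : r a a) : ∀ k, WalkOfLength r k a a
  | 0 => refl a
  | k + 1 => tail (of_loop h k) h

theorem even_of_edge [Std.Symm r] (h : r a b) : ∀ m, WalkOfLength r (2 * m) a a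
  | 0 => refl a
  | m + 1 => ((even_of_edge h m).trans ((single h).tail (Std.Symm.symm _ _ h)) :)

theorem le_add_of_lipschitz {φ : α → ℕ} (hφ : ∀ x y, r x y → φ x ≤ φ y + 1)
    (h : WalkOfLength r k a b) : φ a ≤ φ b + k := by
  induction h with
  | refl => omega
  | tail _ hbc ih => have := hφ _ _ hbc; omega

theorem comap_iff {s : β → β → Prop} {f : α → β} (hf : Function.Injective f)
    (hrs : ∀ a b, r a b ↔ s (f a) (f b)) (hs : ∀ a y, s (f a) y → y ∈ Set.range f) :
    WalkOfLength r k a b ↔ WalkOfLength s k (f a) (f b) := by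
  refine ⟨fun h => ?_, fun h => ?_⟩
  · induction h with
    | refl => exact refl _
    | tail _ hbc ih => exact tail ih ((hrs _ _).1 hbc)
  · suffices ∀ x y, WalkOfLength s k x y → ∀ a, f a = x → ∃ b, f b = y ∧ WalkOfLength r k a b by
      obtain ⟨b', hb', h'⟩ := this _ _ h a rfl
      exact hf hb' ▸ h'
    clear h
    intro x y hxy a hax
    induction hxy with
    | refl => exact ⟨a, hax, refl a⟩
    | tail _ hyz ih =>
      obtain ⟨b, rfl, hb⟩ := ih hax
      obtain ⟨c, rfl⟩ := hs b _ hyz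
      exact ⟨c, rfl, tail hb ((hrs b c).2 hyz)⟩

end WalkOfLength

end Relation

open Relation

theorem Matrix.pow_apply_pos_iff_walkOfLength {ι R : Type*} [Fintype ι] [DecidableEq ι]
    [Semiring R] [LinearOrder R] [IsStrictOrderedRing R] {A : Matrix ι ι R}
    (hA : ∀ i j, 0 ≤ A i j) (k : ℕ) (i j : ι) :
    0 < (A ^ k) i j ↔ WalkOfLength (fun a b => 0 < A a b) k i j := by
  induction k generalizing j with
  | zero => by_cases h : i = j <;> simp [h, WalkOfLength.zero_iff]
  | succ k ih =>
    rw [pow_succ, Matrix.mul_apply, WalkOfLength.succ_iff,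
      Finset.sum_pos_iff_of_nonneg fun m _ => mul_nonneg (pow_apply_nonneg hA k i m) (hA m j)]
    simp only [Finset.mem_univ, true_and, ← ih]
    exact exists_congr fun m => ⟨fun h => ⟨pos_of_mul_pos_left h (hA m j),
      pos_of_mul_pos_right h (pow_apply_nonneg hA k i m)⟩, fun h => mul_pos h.1 h.2⟩

def HubAdj (v : ℕ) (S : ℕ → Prop) (i j : ℕ) : Prop :=
  i ≤ v ∧ j ≤ v ∧ (j = i + 1 ∨ i = j + 1 ∨ (i = v ∧ S j) ∨ (j = v ∧ S i))

noncomputable def hubDist (v : ℕ) (S : ℕ → Prop) (i : ℕ) : ℕ :=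
  sInf {k | WalkOfLength (HubAdj v S) k i v}

noncomputable def hubEcc (v : ℕ) (S : ℕ → Prop) : ℕ :=
  (Finset.range (v + 1)).sup (hubDist v S)

section HubGraph

variable {v : ℕ} {S : ℕ → Prop} {i j k a b : ℕ}

instance HubAdj.instSymm : Std.Symm (HubAdj v S) where
  symm _ _ h := by
    obtain ⟨hx, hy, h⟩ := h
    exact ⟨hy, hx, by tauto⟩

theorem walkOfLength_hubAdj_of_le (hij : i ≤ j) (hj : j ≤ v) :
    WalkOfLength (HubAdj v S) (j - i) i j := by
  obtain ⟨d, rfl⟩ := Nat.exists_eq_add_of_le hij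
  rw [Nat.add_sub_cancel_left]
  induction d with
  | zero => exact .refl i
  | succ d ih => exact (ih (by omega) (by omega)).tail ⟨by omega, hj, Or.inl rfl⟩

theorem walkOfLength_hubAdj_dist (hi : i ≤ v) (hj : j ≤ v) :
    WalkOfLength (HubAdj v S) ((i - j) + (j - i)) i j := by
  rcases le_total i j with hij | hji
  · simpa [Nat.sub_eq_zero_of_le hij] using walkOfLength_hubAdj_of_le hij hj
  · simpa [Nat.sub_eq_zero_of_le hji] using (walkOfLength_hubAdj_of_le hji hi).symm

theorem hubDist_le (h : WalkOfLength (HubAdj v S) k i v) : hubDist v S i ≤ k :=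
  Nat.sInf_le h

theorem walkOfLength_hubDist (hi : i ≤ v) : WalkOfLength (HubAdj v S) (hubDist v S i) i v :=
  Nat.sInf_mem (s := {k | WalkOfLength (HubAdj v S) k i v})
    ⟨v - i, walkOfLength_hubAdj_of_le hi le_rfl⟩

theorem hubDist_hub : hubDist v S v = 0 :=
  Nat.le_zero.1 (hubDist_le (.refl v))

theorem hubDist_le_add (h : WalkOfLength (HubAdj v S) k i j) (hj : j ≤ v) :
    hubDist v S i ≤ k + hubDist v S j :=
  hubDist_le (h.trans (walkOfLength_hubDist hj))

theorem hubDist_le_one (hs : S i) (hi : i ≤ v) : hubDist v S i ≤ 1 :=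
  hubDist_le (.single ⟨hi, le_rfl, by tauto⟩)

theorem hubDist_le_dist_add (hi : i ≤ v) (hj : j ≤ v) :
    hubDist v S i ≤ (i - j) + (j - i) + hubDist v S j :=
  hubDist_le_add (walkOfLength_hubAdj_dist hi hj) hj

theorem hubDist_le_of_mem (hs : S j) (hj : j ≤ v) (hi : i ≤ v) :
    hubDist v S i ≤ (i - j) + (j - i) + 1 :=
  (hubDist_le_dist_add hi hj).trans (Nat.add_le_add_left (hubDist_le_one hs hj) _)

/-- `hubDist` is bounded below by any potential that vanishes at the hub, drops by at most one
along the path, and is at most one on `S`; here the potential is `min (b - |i - a|) (v - i)`. -/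
theorem le_hubDist (hS : ∀ s ≤ v, S s → b ≤ (s - a) + (a - s) + 1) (hab : a + b ≤ v) :
    b ≤ hubDist v S a := by
  have hφ : ∀ x y, HubAdj v S x y →
      min (b - ((x - a) + (a - x))) (v - x) ≤ min (b - ((y - a) + (a - y))) (v - y) + 1 := by
    rintro x y ⟨hx, hy, rfl | rfl | ⟨rfl, hSy⟩ | ⟨rfl, hSx⟩⟩
    · omega
    · omega
    · have := hS y hy hSy; omega
    · have := hS x hx hSx; omega
  have := WalkOfLength.le_add_of_lipschitz hφ (walkOfLength_hubDist (S := S) (by omega : a ≤ v))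
  omega

theorem walkOfLength_hubAdj_of_dist_le (hv : S v) (hi : i ≤ v) (hj : j ≤ v)
    (hd : (i - j) + (j - i) ≤ k) (hpar : (i + j + k) % 2 = 0) :
    WalkOfLength (HubAdj v S) k i j := by
  have hbounce : WalkOfLength (HubAdj v S) (2 * ((k - ((i - j) + (j - i))) / 2)) i i := by
    by_cases hiv : i < v
    · exact .even_of_edge (b := i + 1) ⟨hi, hiv, Or.inl rfl⟩ _
    · obtain rfl : i = v := by omega
      exact .even_of_edge ⟨le_rfl, le_rfl, Or.inr (Or.inr (Or.inl ⟨rfl, hv⟩))⟩ _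
  have := hbounce.trans (walkOfLength_hubAdj_dist hi hj)
  rwa [show 2 * ((k - ((i - j) + (j - i))) / 2) + ((i - j) + (j - i)) = k by omega] at this

theorem walkOfLength_hubAdj_of_hubDist_add_le (hv : S v) (hi : i ≤ v) (hj : j ≤ v)
    (hk : hubDist v S i + hubDist v S j ≤ k) : WalkOfLength (HubAdj v S) k i j := by
  have := ((walkOfLength_hubDist hi).trans
    (.of_loop ⟨le_rfl, le_rfl, by tauto⟩ (k - (hubDist v S i + hubDist v S j)))).trans
    (walkOfLength_hubDist (S := S) hj).symm
  rwa [show hubDist v S i + (k - (hubDist v S i + hubDist v S j)) + hubDist v S j = k by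
    omega] at this

theorem walkOfLength_hubAdj_iff (hv : S v) (hi : i ≤ v) (hj : j ≤ v) :
    WalkOfLength (HubAdj v S) k i j ↔
      ((i - j) + (j - i) ≤ k ∧ (i + j + k) % 2 = 0) ∨ hubDist v S i + hubDist v S j ≤ k := by
  refine ⟨fun h => ?_, fun h => h.elim (fun h => walkOfLength_hubAdj_of_dist_le hv hi hj h.1 h.2)
    (walkOfLength_hubAdj_of_hubDist_add_le hv hi hj)⟩
  induction h with
  | refl => omega
  | @tail k _ j l _ hjl ih =>
    have hlj := hubDist_le_add (.single (Std.Symm.symm _ _ hjl)) hjl.1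
    obtain ⟨hj, hl, hjl'⟩ := hjl
    rcases hjl' with rfl | rfl | ⟨rfl, hSl⟩ | ⟨rfl, hSj⟩
    · omega
    · omega
    · have := hubDist_le_one hSl hl
      have := hubDist_le_dist_add (S := S) hi hj
      rw [hubDist_hub] at *
      omega
    · have := hubDist_le_one hSj hj
      have := hubDist_le_dist_add (S := S) hi hj
      rw [hubDist_hub] at *
      omega

end HubGraph

section Eccentricity

variable {v m : ℕ} {S : ℕ → Prop} {i : ℕ}

theorem hubDist_le_hubEcc (hi : i ≤ v) : hubDist v S i ≤ hubEcc v S :=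
  Finset.le_sup (Finset.mem_range.2 (by omega))

theorem hubEcc_le_iff : hubEcc v S ≤ m ↔ ∀ i ≤ v, hubDist v S i ≤ m := by
  simp [hubEcc, Finset.sup_le_iff]

theorem exists_hubDist_eq_hubEcc : ∃ i ≤ v, hubDist v S i = hubEcc v S := by
  obtain ⟨i, hi, h⟩ := Finset.exists_mem_eq_sup _ ⟨0, Finset.mem_range.2 v.succ_pos⟩ (hubDist v S)
  exact ⟨i, Nat.lt_succ_iff.1 (Finset.mem_range.1 hi), h.symm⟩

theorem one_le_hubEcc (hv : 1 ≤ v) : 1 ≤ hubEcc v S :=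
  (le_hubDist (a := 0) (fun _ _ _ => by omega) (by omega)).trans (hubDist_le_hubEcc (Nat.zero_le v))

theorem isLeast_hubEcc (hv : S v) (hv1 : 1 ≤ v) :
    IsLeast {k | 0 < k ∧ ∀ i ≤ v, ∀ j ≤ v, WalkOfLength (HubAdj v S) k i j} (2 * hubEcc v S) := by
  have hE := one_le_hubEcc (S := S) hv1
  refine ⟨⟨by omega, fun i hi j hj => walkOfLength_hubAdj_of_hubDist_add_le hv hi hj ?_⟩,
    fun k ⟨_, hk⟩ => ?_⟩
  · have := hubDist_le_hubEcc (S := S) hi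
    have := hubDist_le_hubEcc (S := S) hj
    omega
  · obtain ⟨a, ha, hDa⟩ := exists_hubDist_eq_hubEcc (v := v) (S := S)
    obtain ⟨b, hb, hab⟩ : ∃ b ≤ v, (a - b) + (b - a) = 1 :=
      ⟨if a < v then a + 1 else a - 1, by split_ifs <;> omega, by split_ifs <;> omega⟩
    have := hubDist_le_dist_add (S := S) ha hb
    have := (walkOfLength_hubAdj_iff hv ha ha).1 (hk a ha a ha)
    have := (walkOfLength_hubAdj_iff hv ha hb).1 (hk a ha b hb)
    omega

end Eccentricity

section Companion

open scoped Matrix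

variable {n : ℕ} {C : Matrix (Fin n) (Fin n) ℝ} {S : ℕ → Prop}

theorem IsCompanion.apply_eq_zero_or_eq_one (hC : IsCompanion C) (i j : Fin n) :
    C i j = 0 ∨ C i j = 1 := by
  have h := hC i j
  split_ifs at h <;> simp_all

theorem IsCompanion.apply_ne_zero_iff (hC : IsCompanion C) (hn : 0 < n)
    (hS : ∀ j : Fin n, S j ↔ C ⟨n - 1, by omega⟩ j ≠ 0) (i j : Fin n) :
    C i j ≠ 0 ↔ (j : ℕ) = i + 1 ∨ ((i : ℕ) = n - 1 ∧ S j) := by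
  by_cases hi : (i : ℕ) + 1 < n
  · have h := hC i j
    rw [if_pos hi] at h
    rw [h]
    split_ifs with hj
    · simp [hj]
    · simp only [ne_eq, not_true_eq_false, false_iff, not_or, not_and]
      omega
  · have h : i = ⟨n - 1, by omega⟩ := Fin.ext (show (i : ℕ) = n - 1 by omega)
    rw [h, ← hS]
    have := j.2
    simp only [true_and]
    exact ⟨Or.inr, fun h => h.resolve_left (by omega)⟩

theorem IsCompanion.add_transpose_apply_nonneg (hC : IsCompanion C) (i j : Fin n) :
    0 ≤ (C + Cᵀ) i j := by
  rcases hC.apply_eq_zero_or_eq_one i j with h | h <;>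
    rcases hC.apply_eq_zero_or_eq_one j i with h' | h' <;> simp [h, h']

theorem IsCompanion.add_transpose_apply_pos_iff (hC : IsCompanion C) (hn : 0 < n)
    (hS : ∀ j : Fin n, S j ↔ C ⟨n - 1, by omega⟩ j ≠ 0) (i j : Fin n) :
    0 < (C + Cᵀ) i j ↔ HubAdj (n - 1) S i j := by
  have hpos : 0 < (C + Cᵀ) i j ↔ C i j ≠ 0 ∨ C j i ≠ 0 := by
    rcases hC.apply_eq_zero_or_eq_one i j with h | h <;>
      rcases hC.apply_eq_zero_or_eq_one j i with h' | h' <;> norm_num [h, h']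
  rw [hpos, hC.apply_ne_zero_iff hn hS, hC.apply_ne_zero_iff hn hS]
  have := i.2
  have := j.2
  exact ⟨fun h => ⟨by omega, by omega, by tauto⟩, fun ⟨_, _, h⟩ => by tauto⟩

theorem IsCompanion.isPrimitive_and_expIs (hC : IsCompanion C) (hn : 2 ≤ n)
    (hS : ∀ j : Fin n, S j ↔ C ⟨n - 1, by omega⟩ j ≠ 0) (hv : S (n - 1)) :
    IsPrimitive (C + Cᵀ) ∧ ExpIs (C + Cᵀ) (2 * hubEcc (n - 1) S) := by
  have hwalk (k : ℕ) (i j : Fin n) :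
      0 < ((C + Cᵀ) ^ k) i j ↔ WalkOfLength (HubAdj (n - 1) S) k i j := by
    rw [Matrix.pow_apply_pos_iff_walkOfLength hC.add_transpose_apply_nonneg]
    exact WalkOfLength.comap_iff Fin.val_injective (hC.add_transpose_apply_pos_iff (by omega) hS)
      fun _ y h => ⟨⟨y, by have := h.2.1; omega⟩, rfl⟩
  have hset : {k : ℕ | 0 < k ∧ ∀ i j, 0 < ((C + Cᵀ) ^ k) i j} =
      {k | 0 < k ∧ ∀ i ≤ n - 1, ∀ j ≤ n - 1, WalkOfLength (HubAdj (n - 1) S) k i j} := by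
    ext k
    simp only [Set.mem_ofPred_eq, hwalk, Fin.forall_iff]
    exact and_congr_right fun _ =>
      ⟨fun h i hi j hj => h i (by omega) j (by omega),
        fun h i hi j hj => h i (by omega) j (by omega)⟩
  have hleast : ExpIs (C + Cᵀ) (2 * hubEcc (n - 1) S) := by
    unfold ExpIs
    rw [hset]
    exact isLeast_hubEcc hv (by omega)
  exact ⟨⟨hC.add_transpose_apply_nonneg, _, hleast.1⟩, hleast⟩

def companionOf (n : ℕ) (S : ℕ → Prop) [DecidablePred S] : Matrix (Fin n) (Fin n) ℝ :=
  Matrix.of fun i j =>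
    if (i : ℕ) + 1 < n then (if (j : ℕ) = i + 1 then 1 else 0) else if S j then 1 else 0

theorem isCompanion_companionOf [DecidablePred S] : IsCompanion (companionOf n S) := by
  intro i j
  by_cases hi : (i : ℕ) + 1 < n
  · rw [if_pos hi]
    simp [companionOf, hi]
  · rw [if_neg hi]
    simp only [companionOf, Matrix.of_apply, if_neg hi]
    split_ifs <;> simp

theorem companionOf_last_apply [DecidablePred S] (hn : 0 < n) (j : Fin n) :
    companionOf n S ⟨n - 1, by omega⟩ j = if S j then 1 else 0 := by
  simp [companionOf, show ¬ n - 1 + 1 < n by omega]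

theorem mem_expSet_companionClass_iff (hn : 2 ≤ n) {α : ℝ} (hα : α = 0 ∨ α = 1) {e : ℕ} :
    e ∈ expSet (companionClass n (by omega) α 1) ↔
      ∃ S : ℕ → Prop, S (n - 1) ∧ (S 0 ↔ α = 1) ∧ e = 2 * hubEcc (n - 1) S := by
  constructor
  · rintro ⟨_, ⟨C, hC, hC0, hCv, rfl⟩, -, he⟩
    let S (j : ℕ) : Prop := ∃ h : j < n, C ⟨n - 1, by omega⟩ ⟨j, h⟩ ≠ 0
    have hS (j : Fin n) : S j ↔ C ⟨n - 1, by omega⟩ j ≠ 0 := ⟨fun ⟨_, h⟩ => h, fun h => ⟨j.2, h⟩⟩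
    have hv : S (n - 1) := ⟨by omega, by simp [hCv]⟩
    have h0 : S 0 ↔ α ≠ 0 := ⟨fun ⟨_, h⟩ => hC0 ▸ h, fun h => ⟨by omega, hC0 ▸ h⟩⟩
    refine ⟨S, hv, ?_, he.unique (hC.isPrimitive_and_expIs hn hS hv).2⟩
    rcases hα with rfl | rfl <;> simp [h0]
  · rintro ⟨S, hv, h0, rfl⟩
    classical
    have hC : IsCompanion (companionOf n S) := isCompanion_companionOf
    have hS (j : Fin n) : S j ↔ companionOf n S ⟨n - 1, by omega⟩ j ≠ 0 := by
      rw [companionOf_last_apply (by omega)]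
      split_ifs <;> simp_all
    refine ⟨_, ⟨companionOf n S, hC, ?_, ?_, rfl⟩, hC.isPrimitive_and_expIs hn hS hv⟩
    · rw [companionOf_last_apply (by omega)]
      rcases hα with rfl | rfl <;> simp_all
    · rw [companionOf_last_apply (by omega), if_pos hv]

end Companion

section Realisation

variable {v b : ℕ} {S : ℕ → Prop}

theorem hubEcc_le_self : hubEcc v S ≤ v :=
  hubEcc_le_iff.2 fun i hi => by
    have := hubDist_le_dist_add (S := S) hi le_rfl
    rw [hubDist_hub] at this
    omega

theorem two_mul_hubEcc_le_of_zero (h0 : S 0) : 2 * hubEcc v S ≤ v + 1 := by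
  suffices hubEcc v S ≤ (v + 1) / 2 by omega
  refine hubEcc_le_iff.2 fun i hi => ?_
  have := hubDist_le_of_mem h0 (Nat.zero_le v) hi
  have := hubDist_le_dist_add (S := S) hi le_rfl
  rw [hubDist_hub] at this
  omega

theorem two_le_hubEcc_of_not_zero (h0 : ¬ S 0) (hv : 2 ≤ v) : 2 ≤ hubEcc v S :=
  (le_hubDist (a := 0) (fun s _ hs => by rcases s with _ | s <;> simp_all) hv).trans
    (hubDist_le_hubEcc (Nat.zero_le v))

theorem exists_hubEcc_eq_of_zero (hb : 1 ≤ b) (hbv : 2 * b ≤ v + 1) :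
    ∃ S : ℕ → Prop, S v ∧ S 0 ∧ hubEcc v S = b := by
  let S (j : ℕ) : Prop := j = 0 ∨ 2 * b - 1 ≤ j
  refine ⟨S, Or.inr (by omega), Or.inl rfl, le_antisymm ?_ ?_⟩
  · refine hubEcc_le_iff.2 fun i hi => ?_
    have := hubDist_le_of_mem (S := S) (Or.inl rfl) (Nat.zero_le v) hi
    have := hubDist_le_of_mem (S := S) (j := max i (2 * b - 1)) (Or.inr (le_max_right _ _))
      (by omega) hi
    omega
  · refine (le_hubDist (a := b - 1) (fun s _ hs => ?_) (by omega)).trans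
      (hubDist_le_hubEcc (by omega))
    rcases hs with rfl | hs <;> omega

theorem exists_hubEcc_eq_of_not_zero (hb : 2 ≤ b) (hbv : b ≤ v) :
    ∃ S : ℕ → Prop, S v ∧ ¬ S 0 ∧ hubEcc v S = b := by
  let S (j : ℕ) : Prop := b - 1 ≤ j
  refine ⟨S, by omega, by omega, le_antisymm ?_ ?_⟩
  · refine hubEcc_le_iff.2 fun i hi => ?_
    have := hubDist_le_of_mem (S := S) (j := max i (b - 1)) (le_max_right _ _) (by omega) hi
    omega
  · exact (le_hubDist (a := 0) (fun s _ hs => by omega) (by omega)).trans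
      (hubDist_le_hubEcc (Nat.zero_le v))

end Realisation

theorem expSet_companionClass_one_one {n : ℕ} (hn : 2 ≤ n) :
    expSet (companionClass n (by omega) 1 1) =
      {e : ℕ | ∃ t : ℕ, t ≤ (n - 2) / 2 ∧ e = 2 * (t + 1)} := by
  ext e
  rw [mem_expSet_companionClass_iff hn (Or.inr rfl)]
  constructor
  · rintro ⟨S, -, h0, rfl⟩
    have := two_mul_hubEcc_le_of_zero (v := n - 1) (h0.2 rfl)
    have := one_le_hubEcc (S := S) (show 1 ≤ n - 1 by omega)
    exact ⟨hubEcc (n - 1) S - 1, by omega, by omega⟩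
  · rintro ⟨t, ht, rfl⟩
    obtain ⟨S, hv, h0, hS⟩ :=
      exists_hubEcc_eq_of_zero (v := n - 1) (b := t + 1) (by omega) (by omega)
    exact ⟨S, hv, iff_of_true h0 rfl, by rw [hS]⟩

theorem expSet_companionClass_zero_one {n : ℕ} (hn : 3 ≤ n) :
    expSet (companionClass n (by omega) 0 1) =
      {e : ℕ | ∃ t : ℕ, 2 ≤ t ∧ t ≤ n - 1 ∧ e = 2 * t} := by
  ext e
  rw [mem_expSet_companionClass_iff (by omega) (Or.inl rfl)]
  constructor
  · rintro ⟨S, -, h0, rfl⟩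
    exact ⟨hubEcc (n - 1) S, two_le_hubEcc_of_not_zero (fun h => zero_ne_one (h0.1 h)) (by omega),
      hubEcc_le_self, rfl⟩
  · rintro ⟨t, ht, htn, rfl⟩
    obtain ⟨S, hv, h0, hS⟩ := exists_hubEcc_eq_of_not_zero (v := n - 1) ht htn
    exact ⟨S, hv, iff_of_false h0 zero_ne_one, by rw [hS]⟩

/-- For `n ≥ 4`, `E(PSC_n^{1,1}) = {2(t+1) : 0 ≤ t ≤ ⌊(n-2)/2⌋}` and
`E(PSC_n^{0,1}) = {2t : 2 ≤ t ≤ n-1}`; in particular `2(n-1)` is attained. -/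
theorem expSet_PSC_one_one_and_zero_one {n : ℕ} (hn : 4 ≤ n) :
    expSet (companionClass n (by omega) 1 1) =
        {e : ℕ | ∃ t : ℕ, t ≤ (n - 2) / 2 ∧ e = 2 * (t + 1)} ∧
      expSet (companionClass n (by omega) 0 1) =
        {e : ℕ | ∃ t : ℕ, 2 ≤ t ∧ t ≤ n - 1 ∧ e = 2 * t} ∧
      2 * (n - 1) ∈ expSet (companionClass n (by omega) 0 1) := by
  have zero_one := expSet_companionClass_zero_one (show 3 ≤ n by omega)
  exact ⟨expSet_companionClass_one_one (by omega), zero_one,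
    zero_one ▸ ⟨n - 1, by omega, le_rfl, rfl⟩⟩
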